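/- Let K ≥ 1 be an integer, j ≥ 0 an integer, and c, b real numbers. Then I_{C₀}(K,j;c,b) = I_{C₂}(K,j;c,b) − I_{C₁}(K,j;c,b); explicitly, K^{−j} ∫_0^K t^j exp(2πi c t + 2πi b t²) dt = K^{−j} e^{iπ(j+1)/4} ∫_0^{√2 K} t^j exp(2πi c e^{iπ/4} t − 2π b t²) dt − i K^{−j} ∫_0^K (K + it)^j exp(2πi c (K + it) + 2πi b (K + it)²) dt. -/

import Mathlib

/-!
The integrand extends to the entire function `z ↦ z ^ j * exp (2πi c z + 2πi b z²)`, which has a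
primitive on `ℂ` (Morera). Each of the three edge integrals of the triangle `0, K, K + iK` is
therefore a difference of values of that primitive, and the three differences cancel. On the
diagonal edge `z = t e^{iπ/4}` we have `z² = i t²`, which turns the phase `2πi b z²` into the
Gaussian factor `-2π b t²`.
-/

open Complex intervalIntegral
open scoped Real

section Segment

variable {E : Type*} [NormedAddCommGroup E] [NormedSpace ℂ E] [CompleteSpace E]

theorem integral_segment_eq_sub_of_hasDerivAt {f g : ℂ → E} (hg : ∀ z, HasDerivAt g (f z) z)
    (hf : Continuous f) (a v : ℂ) (L : ℝ) :
    ∫ t in (0 : ℝ)..L, v • f (a + t * v) = g (a + L * v) - g a := by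
  have hline (t : ℝ) : HasDerivAt (fun s : ℝ => a + s * v) v t := by
    simpa using ((hasDerivAt_id (t : ℂ)).mul_const v).const_add a |>.comp_ofReal
  have hderiv (t : ℝ) : HasDerivAt (fun s : ℝ => g (a + s * v)) (v • f (a + t * v)) t :=
    (hg _).scomp t (hline t)
  simpa using integral_eq_sub_of_hasDerivAt (fun t _ => hderiv t)
    ((continuous_const.smul (hf.comp (by fun_prop))).intervalIntegrable 0 L)

theorem Differentiable.integral_triangle {f : ℂ → E} (hf : Differentiable ℂ f)
    (a v₁ v₂ v₃ : ℂ) (L₁ L₂ L₃ : ℝ) (h : (L₁ : ℂ) * v₁ + L₂ * v₂ = L₃ * v₃) :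
    (∫ t in (0 : ℝ)..L₁, v₁ • f (a + t * v₁)) +
        (∫ t in (0 : ℝ)..L₂, v₂ • f (a + L₁ * v₁ + t * v₂)) =
      ∫ t in (0 : ℝ)..L₃, v₃ • f (a + t * v₃) := by
  obtain ⟨g, hg⟩ := hf.isExactOn_univ
  have hg' (z : ℂ) : HasDerivAt g (f z) z := hg z (Set.mem_univ z)
  simp only [integral_segment_eq_sub_of_hasDerivAt hg' hf.continuous]
  rw [add_assoc, h]
  abel

end Segment

lemma exp_pi_div_four_mul_I_sq : exp (π / 4 * I) ^ 2 = I := by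
  rw [← Complex.exp_nat_mul]
  convert exp_pi_div_two_mul_I using 2
  push_cast
  ring

lemma sqrt_two_mul_exp_pi_div_four_mul_I : (√2 : ℂ) * exp (π / 4 * I) = 1 + I := by
  have hsqrt : ((√2 : ℝ) : ℂ) ^ 2 = 2 := by norm_cast; simp
  rw [← ofReal_ofNat, ← ofReal_div, exp_mul_I, ← ofReal_cos, ← ofReal_sin,
    Real.cos_pi_div_four, Real.sin_pi_div_four]
  push_cast
  linear_combination (1 + I) / 2 * hsqrt

noncomputable def quadraticPhase (j : ℕ) (c b : ℝ) (z : ℂ) : ℂ :=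
  z ^ j * exp (2 * π * I * c * z + 2 * π * I * b * z ^ 2)

lemma differentiable_quadraticPhase (j : ℕ) (c b : ℝ) :
    Differentiable ℂ (quadraticPhase j c b) := by
  unfold quadraticPhase
  fun_prop

lemma exp_pi_div_four_mul_I_mul_quadraticPhase (j : ℕ) (c b t : ℝ) :
    exp (π / 4 * I) * quadraticPhase j c b (t * exp (π / 4 * I)) =
      exp (I * π * (j + 1) / 4) *
        ((t : ℂ) ^ j * exp (2 * π * I * c * exp (I * π / 4) * t - 2 * π * b * t ^ 2)) := by
  have hpow : exp (π / 4 * I) ^ (j + 1) = exp (I * π * (j + 1) / 4) := by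
    rw [← Complex.exp_nat_mul]
    push_cast
    ring_nf
  have hphase : 2 * π * I * c * (t * exp (π / 4 * I)) + 2 * π * I * b * (t ^ 2 * I) =
      2 * π * I * c * exp (π / 4 * I) * t - 2 * π * b * t ^ 2 := by
    linear_combination (2 * π * b * t ^ 2 : ℂ) * I_sq
  rw [quadraticPhase, mul_pow, mul_pow, exp_pi_div_four_mul_I_sq, hphase, ← hpow,
    show I * π / 4 = π / 4 * I by ring]
  ring

theorem IC0_eq_IC2_sub_IC1 (K : ℕ) (j : ℕ) (c b : ℝ) :
    ((K : ℂ) ^ j)⁻¹ * ∫ t in (0 : ℝ)..(K : ℝ), (t : ℂ) ^ j *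
        Complex.exp (2 * (Real.pi : ℂ) * Complex.I * (c : ℂ) * (t : ℂ) +
          2 * (Real.pi : ℂ) * Complex.I * (b : ℂ) * (t : ℂ) ^ 2)
      = ((K : ℂ) ^ j)⁻¹ * Complex.exp (Complex.I * (Real.pi : ℂ) * ((j : ℂ) + 1) / 4) *
          (∫ t in (0 : ℝ)..(Real.sqrt 2 * K), (t : ℂ) ^ j *
            Complex.exp (2 * (Real.pi : ℂ) * Complex.I * (c : ℂ) *
                Complex.exp (Complex.I * (Real.pi : ℂ) / 4) * (t : ℂ) -
              2 * (Real.pi : ℂ) * (b : ℂ) * (t : ℂ) ^ 2))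
        - Complex.I * ((K : ℂ) ^ j)⁻¹ *
          ∫ t in (0 : ℝ)..(K : ℝ), ((K : ℂ) + Complex.I * (t : ℂ)) ^ j *
            Complex.exp (2 * (Real.pi : ℂ) * Complex.I * (c : ℂ) *
                ((K : ℂ) + Complex.I * (t : ℂ)) +
              2 * (Real.pi : ℂ) * Complex.I * (b : ℂ) *
                ((K : ℂ) + Complex.I * (t : ℂ)) ^ 2) := by
  have hcorner : (K : ℝ) * (1 : ℂ) + (K : ℝ) * I = (√2 * K : ℝ) * exp (π / 4 * I) := by
    push_cast
    linear_combination (-(K : ℂ)) * sqrt_two_mul_exp_pi_div_four_mul_I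
  have htri := (differentiable_quadraticPhase j c b).integral_triangle 0 1 I _ _ _ _ hcorner
  simp only [zero_add, smul_eq_mul, one_mul, mul_one, ofReal_natCast, integral_const_mul,
    exp_pi_div_four_mul_I_mul_quadraticPhase] at htri
  simp only [quadraticPhase, mul_comm ((_ : ℝ) : ℂ) I] at htri
  linear_combination ((K : ℂ) ^ j)⁻¹ * htri
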